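/- arXiv:2407.09699 — 2 statements merged into one kernel-verified Lean document; each statement's English description precedes it below -/
import Mathlib

section
/- Let V be a finite-dimensional real vector space with a Lorentzian symmetric bilinear form g and v ∈ V with g(v,v) = -1. If f < 1, then the bilinear form g̃(x,y) = g(x,y) + f·g(v,x)·g(v,y) is nondegenerate of Lorentzian signature (-,+,...,+). -/
/-- A bilinear form (given as a plain function) is Lorentzian if it has a basis
in which its Gram matrix is `diag(-1, 1, ..., 1)`. -/
def IsLorentzianForm {V : Type*} [AddCommGroup V] [Module ℝ V] (g : V → V → ℝ) : Prop :=
  ∃ (n : ℕ) (b : Module.Basis (Fin n) ℝ V), ∀ i j, g (b i) (b j) =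
    if i = j then (if (i : ℕ) = 0 then -1 else 1) else 0

/-!
Write `r = √(1 - f) > 0` and `s = 1 - r`. For the transvection `E x = x + s g(v,x) v`, symmetry of
`g` and `g(v,v) = -1` give `g(E x, E y) = g(x,y) + (1 - r²) g(v,x) g(v,y) = g̃(x,y)`. As
`1 + g(v, s v) = r ≠ 0`, `E` is invertible, so `g̃` is the pullback of `g` along a linear
automorphism: `E⁻¹` maps a Lorentzian basis of `g` to one of `g̃`, and a form with an orthogonal
basis of non-isotropic vectors is nondegenerate.
-/

open Module

namespace LinearEquiv

variable {K V : Type*} [Field K] [AddCommGroup V] [Module K V]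

/-- Sherman–Morrison: the inverse is the transvection along `-(1 + f v)⁻¹ • v`. -/
def transvectionOfOneAddNeZero {f : Dual K V} {v : V} (h : 1 + f v ≠ 0) : V ≃ₗ[K] V :=
  .ofLinearMap (LinearMap.transvection f v) (LinearMap.transvection f (-(1 + f v)⁻¹ • v))
    (by
      ext x
      simp only [LinearMap.comp_apply, LinearMap.transvection.apply, map_add, LinearMap.map_smul,
        LinearMap.id_apply]
      match_scalars <;> field_simp
      ring)
    (by
      ext x
      simp only [LinearMap.comp_apply, LinearMap.transvection.apply, map_add, LinearMap.map_smul,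
        LinearMap.id_apply]
      match_scalars <;> field_simp
      ring)

theorem transvectionOfOneAddNeZero_apply {f : Dual K V} {v : V} (h : 1 + f v ≠ 0) (x : V) :
    transvectionOfOneAddNeZero h x = x + f x • v :=
  rfl

end LinearEquiv

theorem IsLorentzianForm.comp_linearEquiv {V W : Type*} [AddCommGroup V] [Module ℝ V]
    [AddCommGroup W] [Module ℝ W] {g : W → W → ℝ} (hg : IsLorentzianForm g) (e : V ≃ₗ[ℝ] W) :
    IsLorentzianForm fun x y => g (e x) (e y) := by
  obtain ⟨n, b, hb⟩ := hg
  exact ⟨n, b.map e.symm, fun i j => by simpa using hb i j⟩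

theorem IsLorentzianForm.separatingLeft {V : Type*} [AddCommGroup V] [Module ℝ V]
    {B : LinearMap.BilinForm ℝ V} (hB : IsLorentzianForm fun x y => B x y) : B.SeparatingLeft := by
  obtain ⟨n, b, hb⟩ := hB
  simp only at hb
  refine LinearMap.IsOrthoᵢ.separatingLeft_of_not_isOrtho_basis_self b
    (fun i j hij => by simpa [hij] using hb i j) (fun i => ?_)
  rw [hb, if_pos rfl]
  split_ifs <;> norm_num

theorem LinearMap.BilinForm.apply_add_smul_add_smul_of_apply_self_eq_neg_one {V : Type*}
    [AddCommGroup V] [Module ℝ V] {g : LinearMap.BilinForm ℝ V} (hsymm : ∀ x y, g x y = g y x)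
    {v : V} (hv : g v v = -1) (s : ℝ) (x y : V) :
    g (x + (s * g v x) • v) (y + (s * g v y) • v) = g x y + (1 - (1 - s) ^ 2) * g v x * g v y := by
  simp only [map_add, map_smul, LinearMap.add_apply, LinearMap.smul_apply, smul_eq_mul, hv,
    hsymm x v]
  ring

theorem stmt1_general {V : Type*} [AddCommGroup V] [Module ℝ V]
    (g : LinearMap.BilinForm ℝ V) (hsymm : ∀ x y, g x y = g y x)
    (hL : IsLorentzianForm (fun x y => g x y))
    (v : V) (hv : g v v = -1) (f : ℝ) (hf : f < 1)
    (gt : V → V → ℝ) (hgt : ∀ x y, gt x y = g x y + f * g v x * g v y) :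
    (∀ x : V, (∀ y : V, gt x y = 0) → x = 0) ∧ IsLorentzianForm gt := by
  set s := 1 - √(1 - f)
  have hs : 1 + (s • g v) v ≠ 0 := by
    simp [s, hv, (Real.sqrt_pos.mpr (sub_pos.mpr hf)).ne']
  let E := LinearEquiv.transvectionOfOneAddNeZero hs
  have hgt_eq : gt = fun x y => g (E x) (E y) := by
    ext x y
    simp only [E, LinearEquiv.transvectionOfOneAddNeZero_apply, LinearMap.smul_apply, smul_eq_mul,
      g.apply_add_smul_add_smul_of_apply_self_eq_neg_one hsymm hv, hgt, s, sub_sub_cancel,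
      Real.sq_sqrt (sub_pos.mpr hf).le]
  have hE : IsLorentzianForm fun x y => g (E x) (E y) := hL.comp_linearEquiv E
  rw [hgt_eq]
  exact ⟨IsLorentzianForm.separatingLeft (B := g.compl₁₂ (E : V →ₗ[ℝ] V) E) hE, hE⟩

theorem stmt1 {V : Type*} [AddCommGroup V] [Module ℝ V] [FiniteDimensional ℝ V]
    (hdim : 2 ≤ Module.finrank ℝ V)
    (g : LinearMap.BilinForm ℝ V) (hsymm : ∀ x y, g x y = g y x)
    (hL : IsLorentzianForm (fun x y => g x y))
    (v : V) (hv : g v v = -1) (f : ℝ) (hf : f < 1)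
    (gt : V → V → ℝ) (hgt : ∀ x y, gt x y = g x y + f * g v x * g v y) :
    (∀ x : V, (∀ y : V, gt x y = 0) → x = 0) ∧ IsLorentzianForm gt :=
  stmt1_general g hsymm hL v hv f hf gt hgt
end

section
/- Let g and ḡ be Lorentzian symmetric bilinear forms on a finite-dimensional real vector space V, let v ∈ V with g(v,v) = ḡ(v,v) = -1, and let f, f̄ ∈ ℝ. If g + f·g(v,·)⊗g(v,·) = ḡ + f̄·ḡ(v,·)⊗ḡ(v,·) and this common form g̃ satisfies g̃(v,v) < 0 (equivalently f, f̄ < 1), and moreover g̃(v,w) determines g(v,w) and ḡ(v,w) via the factor (1-f), then g = ḡ and f = f̄. In other words, for fixed v, the pair (g,f) with g(v,v) = -1 and f < 1 is uniquely determined by g̃. -/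
/-!
Evaluating the common form at `(v, v)` gives `f = f̄`. Evaluating it at `(v, x)` then gives
`(1 - f) g(v, x) = (1 - f) ḡ(v, x)`, so `g(v, ·) = ḡ(v, ·)` because `f ≠ 1`; hence the two rank-one
corrections coincide and so do `g` and `ḡ`.
-/

namespace LinearMap.BilinForm

variable {K V : Type*} [Field K] [AddCommGroup V] [Module K V]
  {g gbar : LinearMap.BilinForm K V} {v : V} {f fbar : K}
  (heq : ∀ x y, g x y + f * g v x * g v y = gbar x y + fbar * gbar v x * gbar v y)
  (hv : g v v = -1) (hv' : gbar v v = -1)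

include heq hv hv'

theorem coeff_eq_of_add_rankOne_eq : f = fbar := by
  have hvv := heq v v
  rw [hv, hv'] at hvv
  linear_combination hvv

theorem apply_left_eq_of_add_rankOne_eq (hf : f ≠ 1) (x : V) : g v x = gbar v x := by
  have hff := coeff_eq_of_add_rankOne_eq heq hv hv'
  have hvx := heq v x
  rw [hv, hv'] at hvx
  refine mul_left_cancel₀ (sub_ne_zero.mpr hf.symm) ?_
  linear_combination hvx + gbar v x * hff

theorem eq_of_add_rankOne_eq (hf : f ≠ 1) : g = gbar ∧ f = fbar := by
  have hff := coeff_eq_of_add_rankOne_eq heq hv hv'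
  have hgv := apply_left_eq_of_add_rankOne_eq heq hv hv' hf
  refine ⟨ext fun x y => ?_, hff⟩
  have hxy := heq x y
  rw [hgv x, hgv y, hff] at hxy
  linear_combination hxy

end LinearMap.BilinForm

theorem stmt9_general {V : Type*} [AddCommGroup V] [Module ℝ V]
    (g gbar : LinearMap.BilinForm ℝ V)
    (v : V) (hv : g v v = -1) (hv' : gbar v v = -1)
    (f fbar : ℝ) (hf : f < 1)
    (heq : ∀ x y : V,
      g x y + f * g v x * g v y = gbar x y + fbar * gbar v x * gbar v y) :
    (∀ x y : V, g x y = gbar x y) ∧ f = fbar := by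
  obtain ⟨hg, hff⟩ := LinearMap.BilinForm.eq_of_add_rankOne_eq heq hv hv' hf.ne
  exact ⟨fun x y => by rw [hg], hff⟩

theorem stmt9 {V : Type*} [AddCommGroup V] [Module ℝ V] [FiniteDimensional ℝ V]
    (hdim : 2 ≤ Module.finrank ℝ V)
    (g gbar : LinearMap.BilinForm ℝ V)
    (hsymm : ∀ x y, g x y = g y x) (hsymm' : ∀ x y, gbar x y = gbar y x)
    (hL : IsLorentzianForm (fun x y => g x y))
    (hL' : IsLorentzianForm (fun x y => gbar x y))
    (v : V) (hv : g v v = -1) (hv' : gbar v v = -1)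
    (f fbar : ℝ) (hf : f < 1) (hfbar : fbar < 1)
    (heq : ∀ x y : V,
      g x y + f * g v x * g v y = gbar x y + fbar * gbar v x * gbar v y) :
    (∀ x y : V, g x y = gbar x y) ∧ f = fbar :=
  stmt9_general g gbar v hv hv' f fbar hf heq
end
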